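/- Consider the localizations R[1/a₁], R[1/a₃], and R[1/(a₁a₃)] of R, with the canonical maps α : R → R[1/a₁] × R[1/a₃], r ↦ (r/1, r/1), and β : R[1/a₁] × R[1/a₃] → R[1/(a₁a₃)], (p, q) ↦ (image of p) − (image of q). Then α is injective and the kernel of β equals the range of α. (This is the degeneration of the Mayer–Vietoris sequence for the cover of the curve by the loci where a₁ and a₃ are invertible.) -/

import Mathlib

/-!
Viewing `f` as a monic quadratic in `a₆`, `R ≅ A[a₆]/(f)` is free of rank two over
`A = ℤ_[2][a₁, a₃]`. In `A` the elements `a₁, a₃` form a regular sequence (`a₁` is prime and does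
not divide `a₃`), and freeness carries this over to `R`. For a regular pair `s, t` the sequence
`0 → R → R[1/s] × R[1/t] → R[1/st]` is exact: a pair `r₁/sᵐ`, `r₂/tⁿ` with the same image gives
`tⁿ r₁ = sᵐ r₂`, so `sᵐ ∣ r₁` and both fractions come from `r₁/sᵐ ∈ R`.
-/

open MvPolynomial

noncomputable section

/-- `c = a₁⁶ + a₁³a₃ + a₃²` in `P = ℤ_[2][a₁, a₃, a₆]` (with `X 0 = a₁`, `X 1 = a₃`, `X 2 = a₆`). -/
def cpoly : MvPolynomial (Fin 3) ℤ_[2] := (X 0) ^ 6 + (X 0) ^ 3 * X 1 + (X 1) ^ 2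

/-- `f = a₆² + a₆·c + c² − (5/9)·a₁⁶·c` in `P`. -/
def fpoly : MvPolynomial (Fin 3) ℤ_[2] :=
  (X 2) ^ 2 + X 2 * cpoly + cpoly ^ 2 - C (5 * Ring.inverse 9) * (X 0) ^ 6 * cpoly

/-- `R = P/(f)`, the ring of automorphic forms on the double cover `𝒴`. -/
abbrev RD : Type := MvPolynomial (Fin 3) ℤ_[2] ⧸ Ideal.span {fpoly}

/-- The image of `a₁` in `R`. -/
def b₁ : RD := Ideal.Quotient.mk _ (X 0)
/-- The image of `a₃` in `R`. -/
def b₃ : RD := Ideal.Quotient.mk _ (X 1)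
/-- The image of `a₆` in `R`. -/
def b₆ : RD := Ideal.Quotient.mk _ (X 2)

open scoped nonZeroDivisors

section RegularPair

variable {R : Type*} [CommRing R] {s t : R}

theorem dvd_of_dvd_pow_mul (hst : ∀ r, s ∣ t * r → s ∣ r) (n : ℕ) {r : R}
    (h : s ∣ t ^ n * r) : s ∣ r := by
  induction n generalizing r with
  | zero => simpa using h
  | succ n ih => exact ih (hst _ (by rwa [pow_succ', mul_assoc] at h))

theorem pow_dvd_of_pow_dvd_pow_mul (hs : s ∈ R⁰) (hst : ∀ r, s ∣ t * r → s ∣ r) (m n : ℕ)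
    {r : R} (h : s ^ m ∣ t ^ n * r) : s ^ m ∣ r := by
  induction m generalizing r with
  | zero => simp
  | succ m ih =>
    obtain ⟨r', rfl⟩ := dvd_of_dvd_pow_mul hst n ((dvd_pow_self s m.succ_ne_zero).trans h)
    obtain ⟨c, hc⟩ := h
    have hr' : t ^ n * r' = s ^ m * c :=
      (isRegular_iff_mem_nonZeroDivisors.mpr hs).left (show s * _ = s * _ by linear_combination hc)
    rw [pow_succ']
    exact mul_dvd_mul_left s (ih ⟨c, hr'⟩)

end RegularPair

section MayerVietoris

variable {R S₁ S₂ S : Type*} [CommRing R] [CommRing S₁] [CommRing S₂] [CommRing S]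
  [Algebra R S₁] [Algebra R S₂] [Algebra R S] {s t : R}

theorem injective_algebraMap_prod [IsLocalization.Away s S₁] (hs : s ∈ R⁰) :
    Function.Injective fun r : R => (algebraMap R S₁ r, algebraMap R S₂ r) :=
  Function.Injective.of_comp (f := Prod.fst)
    (IsLocalization.injective S₁ (Submonoid.powers_le.mpr hs))

theorem eq_algebraMap_of_mul_pow_eq [IsLocalization.Away s S₁] {p : S₁} {r : R} {m : ℕ}
    (h : p * algebraMap R S₁ s ^ m = algebraMap R S₁ (s ^ m * r)) : p = algebraMap R S₁ r := by
  rw [map_mul, map_pow, mul_comm (_ ^ m)] at h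
  exact (IsLocalization.Away.algebraMap_pow_isUnit s m).mul_right_cancel h

theorem map_sub_map_eq_zero_iff [IsLocalization.Away s S₁] [IsLocalization.Away t S₂]
    [IsLocalization.Away (s * t) S] (hs : s ∈ R⁰) (ht : t ∈ R⁰)
    (hst : ∀ r, s ∣ t * r → s ∣ r) {φ₁ : S₁ →+* S} {φ₂ : S₂ →+* S}
    (hφ₁ : ∀ r, φ₁ (algebraMap R S₁ r) = algebraMap R S r)
    (hφ₂ : ∀ r, φ₂ (algebraMap R S₂ r) = algebraMap R S r) (p : S₁) (q : S₂) :
    φ₁ p - φ₂ q = 0 ↔ ∃ r, algebraMap R S₁ r = p ∧ algebraMap R S₂ r = q := by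
  refine ⟨fun h => ?_, by rintro ⟨r, rfl, rfl⟩; rw [hφ₁, hφ₂, sub_self]⟩
  obtain ⟨m, r₁, hp⟩ := IsLocalization.Away.surj s p
  obtain ⟨n, r₂, hq⟩ := IsLocalization.Away.surj t q
  have hp' : φ₁ p * algebraMap R S s ^ m = algebraMap R S r₁ := by
    simpa [hφ₁] using congr(φ₁ $hp)
  have hq' : φ₂ q * algebraMap R S t ^ n = algebraMap R S r₂ := by
    simpa [hφ₂] using congr(φ₂ $hq)
  have hcross : t ^ n * r₁ = s ^ m * r₂ := by
    apply IsLocalization.injective S (Submonoid.powers_le.mpr (mul_mem hs ht))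
    simp only [map_mul, map_pow]
    linear_combination (algebraMap R S s ^ m * algebraMap R S t ^ n) * h
      - algebraMap R S t ^ n * hp' + algebraMap R S s ^ m * hq'
  obtain ⟨r, rfl⟩ := pow_dvd_of_pow_dvd_pow_mul hs hst m n ⟨r₂, hcross⟩
  obtain rfl : r₂ = t ^ n * r :=
    ((isRegular_iff_mem_nonZeroDivisors.mpr (pow_mem hs m)).left
      (show s ^ m * _ = s ^ m * _ by linear_combination hcross)).symm
  exact ⟨r, (eq_algebraMap_of_mul_pow_eq hp).symm, (eq_algebraMap_of_mul_pow_eq hq).symm⟩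

end MayerVietoris

section TorsionFree

variable {A B : Type*} [CommRing A] [CommRing B] [Algebra A B]

theorem algebraMap_mem_nonZeroDivisors_of_isTorsionFree [Module.IsTorsionFree A B] {a : A}
    (ha : a ∈ A⁰) : algebraMap A B a ∈ B⁰ := by
  refine mem_nonZeroDivisors_iff_right.mpr fun z hz => ?_
  rw [mul_comm, ← Algebra.smul_def] at hz
  exact (isRegular_iff_mem_nonZeroDivisors.mpr ha).smul_eq_zero_iff_right.mp hz

theorem algebraMap_dvd_of_dvd_algebraMap_mul [Module.Free A B] {a b : A}
    (hab : ∀ c, a ∣ b * c → a ∣ c) {z : B}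
    (h : algebraMap A B a ∣ algebraMap A B b * z) : algebraMap A B a ∣ z := by
  let β := Module.Free.chooseBasis A B
  obtain ⟨w, hw⟩ := h
  have hcoord : ∀ i, a ∣ β.repr z i := fun i =>
    hab _ ⟨β.repr w i, by simpa [← Algebra.smul_def] using congr(β.repr $hw i)⟩
  choose c hc using hcoord
  refine ⟨∑ i ∈ (β.repr z).support, c i • β i, ?_⟩
  calc z = ∑ i ∈ (β.repr z).support, β.repr z i • β i := (β.linearCombination_repr z).symm
    _ = _ := by simp only [hc, Finset.mul_sum, Algebra.smul_def, map_mul, mul_assoc]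

end TorsionFree

theorem mem_nonZeroDivisors_of_ringEquiv {R S : Type*} [CommRing R] [CommRing S] (e : R ≃+* S)
    {x : R} (h : e x ∈ S⁰) : x ∈ R⁰ := by
  rw [← MulEquivClass.map_nonZeroDivisors e.symm]
  exact ⟨e x, h, e.symm_apply_apply x⟩

/-- `A = ℤ_[2][a₁, a₃]`, with `X 0 = a₁` and `X 1 = a₃`. -/
abbrev A₁₃ : Type := MvPolynomial (Fin 2) ℤ_[2]

/-- `P ≃ A[a₆]`: the rotation moves `a₆` to the front, where `finSuccEquiv` makes it the
polynomial variable. -/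
def polyEquiv : MvPolynomial (Fin 3) ℤ_[2] ≃+* Polynomial A₁₃ :=
  (renameEquiv ℤ_[2] (finRotate 3)).toRingEquiv.trans (finSuccEquiv ℤ_[2] 2).toRingEquiv

@[simp] theorem polyEquiv_X_zero : polyEquiv (X 0) = Polynomial.C (X 0) := by
  simp [polyEquiv, finSuccEquiv_apply]; rfl

@[simp] theorem polyEquiv_X_one : polyEquiv (X 1) = Polynomial.C (X 1) := by
  simp [polyEquiv, finSuccEquiv_apply]; rfl

@[simp] theorem polyEquiv_X_two : polyEquiv (X 2) = Polynomial.X := by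
  simp [polyEquiv, finSuccEquiv_apply]

@[simp] theorem polyEquiv_C (r : ℤ_[2]) : polyEquiv (C r) = Polynomial.C (C r) := by
  simp [polyEquiv, finSuccEquiv_apply]

def cpolyA : A₁₃ := X 0 ^ 6 + X 0 ^ 3 * X 1 + X 1 ^ 2

def fpolyA : Polynomial A₁₃ :=
  Polynomial.X ^ 2 + Polynomial.C cpolyA * Polynomial.X
    + Polynomial.C (cpolyA ^ 2 - C (5 * Ring.inverse 9) * X 0 ^ 6 * cpolyA)

theorem polyEquiv_fpoly : polyEquiv fpoly = fpolyA := by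
  simp only [fpoly, cpoly, fpolyA, cpolyA, map_add, map_sub, map_mul, map_pow, polyEquiv_X_zero,
    polyEquiv_X_one, polyEquiv_X_two, polyEquiv_C]
  ring

theorem fpolyA_monic : fpolyA.Monic := by
  unfold fpolyA; monicity!

instance : Module.Free A₁₃ (AdjoinRoot fpolyA) := fpolyA_monic.free_adjoinRoot

def rdEquiv : RD ≃+* AdjoinRoot fpolyA :=
  Ideal.quotientEquiv _ _ polyEquiv (by
    rw [Ideal.map_span, Set.image_singleton]
    exact congrArg (fun p => Ideal.span {p}) polyEquiv_fpoly.symm)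

theorem rdEquiv_b₁ : rdEquiv b₁ = algebraMap A₁₃ (AdjoinRoot fpolyA) (X 0) :=
  congr(AdjoinRoot.mk fpolyA $polyEquiv_X_zero)

theorem rdEquiv_b₃ : rdEquiv b₃ = algebraMap A₁₃ (AdjoinRoot fpolyA) (X 1) :=
  congr(AdjoinRoot.mk fpolyA $polyEquiv_X_one)

theorem b₁_mem_nonZeroDivisors : b₁ ∈ RD⁰ :=
  mem_nonZeroDivisors_of_ringEquiv rdEquiv (rdEquiv_b₁ ▸
    algebraMap_mem_nonZeroDivisors_of_isTorsionFree (mem_nonZeroDivisors_of_ne_zero (X_ne_zero 0)))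

theorem b₃_mem_nonZeroDivisors : b₃ ∈ RD⁰ :=
  mem_nonZeroDivisors_of_ringEquiv rdEquiv (rdEquiv_b₃ ▸
    algebraMap_mem_nonZeroDivisors_of_isTorsionFree (mem_nonZeroDivisors_of_ne_zero (X_ne_zero 1)))

theorem b₁_dvd_of_dvd_b₃_mul (r : RD) (h : b₁ ∣ b₃ * r) : b₁ ∣ r := by
  have hA : ∀ c : A₁₃, X 0 ∣ X 1 * c → X 0 ∣ c := fun c hc =>
    (X_prime.dvd_or_dvd hc).resolve_left (by simp [X_dvd_X])
  rw [← map_dvd_iff rdEquiv, map_mul, rdEquiv_b₁, rdEquiv_b₃] at h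
  rw [← map_dvd_iff rdEquiv, rdEquiv_b₁]
  exact algebraMap_dvd_of_dvd_algebraMap_mul hA h

/-- The Mayer–Vietoris sequence for the cover by the loci where `a₁`
and `a₃` are invertible degenerates: the map `α : R → R[1/a₁] × R[1/a₃]` is injective,
and for the (compatible) maps into `R[1/(a₁a₃)]` the kernel of the difference map `β`
is exactly the range of `α`. -/
theorem mayer_vietoris_degeneration :
    Function.Injective (fun r : RD =>
      (algebraMap RD (Localization.Away b₁) r, algebraMap RD (Localization.Away b₃) r)) ∧
    ∀ (φ₁ : Localization.Away b₁ →+* Localization.Away (b₁ * b₃))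
      (φ₂ : Localization.Away b₃ →+* Localization.Away (b₁ * b₃)),
      (∀ r : RD, φ₁ (algebraMap RD (Localization.Away b₁) r) =
        algebraMap RD (Localization.Away (b₁ * b₃)) r) →
      (∀ r : RD, φ₂ (algebraMap RD (Localization.Away b₃) r) =
        algebraMap RD (Localization.Away (b₁ * b₃)) r) →
      ∀ (p : Localization.Away b₁) (q : Localization.Away b₃),
        φ₁ p - φ₂ q = 0 ↔
          ∃ r : RD, algebraMap RD (Localization.Away b₁) r = p ∧
            algebraMap RD (Localization.Away b₃) r = q :=
  ⟨injective_algebraMap_prod b₁_mem_nonZeroDivisors, fun _ _ hφ₁ hφ₂ =>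
    map_sub_map_eq_zero_iff b₁_mem_nonZeroDivisors b₃_mem_nonZeroDivisors b₁_dvd_of_dvd_b₃_mul
      hφ₁ hφ₂⟩
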